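/- arXiv:1504.07920 — 3 statements merged into one kernel-verified Lean document; each statement's English description precedes it below -/
import Mathlib

section
/- For every game option (Y,X,X') and every i = 1,…,d, the bid price satisfies π^b_i(Y,X,X') = −π^a_i(−X,−Y,−X') = −inf{ z ∈ ℝ : z e^i ∈ Z^b_0 }, where Z^b_0 is the initial set produced by the buyer's backward construction. -/
open Pointwise
open scoped MeasureTheory

noncomputable section

/-- Euclidean dot product on `Fin d → ℝ`. -/
def dotp {d : ℕ} (x y : Fin d → ℝ) : ℝ := ∑ i, x i * y i

/-- The `i`-th canonical basis vector of `ℝ^d`. -/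
def eVec {d : ℕ} (i : Fin d) : Fin d → ℝ := Pi.single i 1

/-- The solvency cone determined by a matrix of exchange rates: the convex cone
generated by the canonical basis vectors `e^i` and the vectors `π^{ij} e^i − e^j`. -/
def solvencyCone {d : ℕ} (π : Fin d → Fin d → ℝ) : Set (Fin d → ℝ) :=
  {x | ∃ a : Fin d → ℝ, ∃ b : Fin d → Fin d → ℝ,
    (∀ i, 0 ≤ a i) ∧ (∀ i j, 0 ≤ b i j) ∧
    x = (∑ i, a i • eVec i) + ∑ i, ∑ j, b i j • (π i j • eVec i - eVec j)}

/-- Positive polar of a set in `ℝ^d`. -/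
def posPolar {d : ℕ} (A : Set (Fin d → ℝ)) : Set (Fin d → ℝ) :=
  {x | ∀ y ∈ A, 0 ≤ dotp x y}

/-- A (closed) polyhedron: a finite intersection of closed half-spaces. -/
def IsPolyhedron {d : ℕ} (A : Set (Fin d → ℝ)) : Prop :=
  ∃ (n : ℕ) (a : Fin n → Fin d → ℝ) (b : Fin n → ℝ),
    A = {x | ∀ k, dotp (a k) x ≤ b k}

/-- A finite union of nonempty (closed) polyhedra. -/
def FinUnionPoly {d : ℕ} (A : Set (Fin d → ℝ)) : Prop :=
  ∃ (n : ℕ) (Q : Fin n → Set (Fin d → ℝ)),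
    (∀ k, IsPolyhedron (Q k) ∧ (Q k).Nonempty) ∧ A = ⋃ k, Q k

/-- The atom of the σ-algebra `m` containing `ω`. -/
def atomOf {Ω : Type*} (m : MeasurableSpace Ω) (ω : Ω) : Set Ω :=
  {ω' | ∀ A : Set Ω, MeasurableSet[m] A → ω ∈ A → ω' ∈ A}

variable {Ω : Type*}

/-- A stopping time with values in `0,…,T`. -/
def IsStoppingTime (F : ℕ → MeasurableSpace Ω) (T : ℕ) (τ : Ω → ℕ) : Prop :=
  (∀ ω, τ ω ≤ T) ∧ ∀ t, MeasurableSet[F t] {ω | τ ω ≤ t}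

/-- A randomised stopping time: an adapted nonnegative process with `Σ_{t=0}^T χ_t = 1`. -/
def IsRandomisedST [Fintype Ω] (F : ℕ → MeasurableSpace Ω) (T : ℕ) (χ : ℕ → Ω → ℝ) : Prop :=
  (∀ t, t ≤ T → Measurable[F t] (χ t)) ∧ (∀ t ω, t ≤ T → 0 ≤ χ t ω) ∧
  ∀ ω, ∑ t ∈ Finset.range (T + 1), χ t ω = 1

/-- `χ*_t = Σ_{s=t}^T χ_s`. -/
def chiStar (T : ℕ) (χ : ℕ → Ω → ℝ) (t : ℕ) (ω : Ω) : ℝ := ∑ s ∈ Finset.Icc t T, χ s ω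

/-- The truncated randomised stopping time `χ ∧ σ`,
`(χ∧σ)_t = χ_t 1_{t<σ} + χ*_t 1_{t=σ}`. -/
def trunc (T : ℕ) (χ : ℕ → Ω → ℝ) (σ : Ω → ℕ) (t : ℕ) (ω : Ω) : ℝ :=
  if t < σ ω then χ t ω else if t = σ ω then chiStar T χ t ω else 0

/-- The value `A_χ = Σ_{t=0}^T χ_t A_t` of an (adapted real) process at a randomised
stopping time. -/
def valAt (T : ℕ) (χ : ℕ → Ω → ℝ) (A : ℕ → Ω → ℝ) (ω : Ω) : ℝ :=
  ∑ t ∈ Finset.range (T + 1), χ t ω * A t ω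

/-- Expectation with respect to a probability `p` on a finite space. -/
def expect [Fintype Ω] (p : Ω → ℝ) (f : Ω → ℝ) : ℝ := ∑ ω, p ω * f ω

/-- The game option payoff
`Q_{st} = Y_t 1_{s>t} + X_s 1_{s<t} + X'_s 1_{s=t}`. -/
def payoffQ {d : ℕ} (Y X X' : ℕ → Ω → Fin d → ℝ) (s t : ℕ) (ω : Ω) : Fin d → ℝ :=
  if t < s then Y t ω else if s < t then X s ω else X' s ω

/-- The auxiliary payoff
`H_{st} = Y_t 1_{s>t} + X_s 1_{s=t<T} + X'_s 1_{s=t=T}`. -/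
def payoffH {d : ℕ} (T : ℕ) (Y X X' : ℕ → Ω → Fin d → ℝ) (s t : ℕ) (ω : Ω) : Fin d → ℝ :=
  if t < s then Y t ω
  else if s = t ∧ s < T then X s ω
  else if s = t ∧ s = T then X' s ω
  else 0

/-- `(Q_{σ·}·S_{σ∧·})_χ = Σ_{t=0}^{σ−1} χ_t Y_t·S_t + χ*_{σ+1} X_σ·S_σ + χ_σ X'_σ·S_σ`. -/
def sellerValue {d : ℕ} (T : ℕ) (Y X X' S : ℕ → Ω → Fin d → ℝ) (σ : Ω → ℕ)
    (χ : ℕ → Ω → ℝ) (ω : Ω) : ℝ :=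
  (∑ t ∈ Finset.range (σ ω), χ t ω * dotp (Y t ω) (S t ω))
    + chiStar T χ (σ ω + 1) ω * dotp (X (σ ω) ω) (S (σ ω) ω)
    + χ (σ ω) ω * dotp (X' (σ ω) ω) (S (σ ω) ω)

/-- `(Q_{·τ}·S_{·∧τ})_χ = Σ_{s=0}^{τ−1} χ_s X_s·S_s + χ*_{τ+1} Y_τ·S_τ + χ_τ X'_τ·S_τ`. -/
def buyerValue {d : ℕ} (T : ℕ) (Y X X' S : ℕ → Ω → Fin d → ℝ) (τ : Ω → ℕ)
    (χ : ℕ → Ω → ℝ) (ω : Ω) : ℝ :=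
  (∑ s ∈ Finset.range (τ ω), χ s ω * dotp (X s ω) (S s ω))
    + chiStar T χ (τ ω + 1) ω * dotp (Y (τ ω) ω) (S (τ ω) ω)
    + χ (τ ω) ω * dotp (X' (τ ω) ω) (S (τ ω) ω)

/-- The randomised stopping time `χ'_t = χ_t 1_{t<σ} + χ*_σ 1_{t=T}`. -/
def chiPrime (T : ℕ) (χ : ℕ → Ω → ℝ) (σ : Ω → ℕ) (t : ℕ) (ω : Ω) : ℝ :=
  if t < σ ω then χ t ω else if t = T then chiStar T χ (σ ω) ω else 0

/-- The Kabanov discrete-time currency model with proportional transaction costs on a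
finite probability space. -/
structure Market (Ω : Type*) [Fintype Ω] (d T : ℕ) where
  F : ℕ → MeasurableSpace Ω
  F_mono : ∀ s t : ℕ, s ≤ t → F s ≤ F t
  F_zero : F 0 = ⊥
  F_top : F T = ⊤
  P : Ω → ℝ
  P_pos : ∀ ω, 0 < P ω
  P_sum : ∑ ω, P ω = 1
  pi : ℕ → Fin d → Fin d → Ω → ℝ
  pi_pos : ∀ t, t ≤ T → ∀ i j ω, 0 < pi t i j ω
  pi_one : ∀ t, t ≤ T → ∀ i ω, pi t i i ω = 1
  pi_meas : ∀ t, t ≤ T → ∀ i j, Measurable[F t] (pi t i j)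

variable [Fintype Ω] {d T : ℕ}

/-- The solvency cone `K_t(ω)`. -/
def Market.cone (M : Market Ω d T) (t : ℕ) (ω : Ω) : Set (Fin d → ℝ) :=
  solvencyCone (fun i j => M.pi t i j ω)

/-- Self-financing (predictable) trading strategy. -/
def Market.SelfFinancing (M : Market Ω d T) (y : ℕ → Ω → Fin d → ℝ) : Prop :=
  Measurable[M.F 0] (y 0) ∧ (∀ t, t < T → Measurable[M.F t] (y (t + 1))) ∧
  ∀ t, t < T → ∀ ω, y t ω - y (t + 1) ω ∈ M.cone t ω

/-- Absence of arbitrage. -/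
def Market.NoArbitrage (M : Market Ω d T) : Prop :=
  ¬∃ y : ℕ → Ω → Fin d → ℝ, M.SelfFinancing y ∧ (∀ ω, y 0 ω = 0) ∧
    ∃ x : Ω → Fin d → ℝ, (∀ ω i, 0 ≤ x ω i) ∧ x ≠ 0 ∧ ∀ ω, y T ω - x ω ∈ M.cone T ω

/-- An equivalent martingale pair `(ℙ,S)` with `S_t ∈ K*_t \ {0}`. -/
def MartingalePair (M : Market Ω d T) (p : Ω → ℝ) (S : ℕ → Ω → Fin d → ℝ) : Prop :=
  (∀ ω, 0 < p ω) ∧ (∑ ω, p ω = 1) ∧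
  (∀ t, t ≤ T → Measurable[M.F t] (S t)) ∧
  (∀ t, t < T → ∀ A : Set Ω, MeasurableSet[M.F t] A →
    (∑ ω, A.indicator (fun ω' => p ω' • S (t + 1) ω') ω)
      = ∑ ω, A.indicator (fun ω' => p ω' • S t ω') ω) ∧
  ∀ t ω, t ≤ T → S t ω ∈ posPolar (M.cone t ω) ∧ S t ω ≠ 0

/-- A `χ`-approximate martingale pair `(ℙ,S)`. -/
def ApproxPair (M : Market Ω d T) (χ : ℕ → Ω → ℝ) (p : Ω → ℝ)
    (S : ℕ → Ω → Fin d → ℝ) : Prop :=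
  (∀ ω, 0 ≤ p ω) ∧ (∑ ω, p ω = 1) ∧
  (∀ t, t ≤ T → Measurable[M.F t] (S t)) ∧
  (∀ t ω, t ≤ T → S t ω ∈ posPolar (M.cone t ω) ∧ S t ω ≠ 0) ∧
  ∀ t ω, t ≤ T →
    (∑ ω', (atomOf (M.F t) ω).indicator
      (fun ω'' => p ω'' • ∑ s ∈ Finset.Icc (t + 1) T, χ s ω'' • S s ω'') ω')
      ∈ posPolar (M.cone t ω)

/-- A `χ`-approximate martingale pair with `S^i ≡ 1`: membership of `P̄^i(χ)`. -/
def ApproxPairI (M : Market Ω d T) (χ : ℕ → Ω → ℝ) (i : Fin d) (p : Ω → ℝ)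
    (S : ℕ → Ω → Fin d → ℝ) : Prop :=
  ApproxPair M χ p S ∧ ∀ t ω, t ≤ T → S t ω i = 1

/-- A `χ`-approximate equivalent martingale pair with `S^i ≡ 1`: membership of `P^i(χ)`. -/
def EquivApproxPairI (M : Market Ω d T) (χ : ℕ → Ω → ℝ) (i : Fin d) (p : Ω → ℝ)
    (S : ℕ → Ω → Fin d → ℝ) : Prop :=
  ApproxPairI M χ i p S ∧ ∀ ω, 0 < p ω

/-- A game option `(Y,X,X')`. -/
def IsGameOption (M : Market Ω d T) (Y X X' : ℕ → Ω → Fin d → ℝ) : Prop :=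
  (∀ t, t ≤ T → Measurable[M.F t] (Y t)) ∧ (∀ t, t ≤ T → Measurable[M.F t] (X t)) ∧
  (∀ t, t ≤ T → Measurable[M.F t] (X' t)) ∧
  ∀ t ω, t ≤ T → X t ω - X' t ω ∈ M.cone t ω ∧ X' t ω - Y t ω ∈ M.cone t ω

/-- `(σ,y)` hedges the game option `(Y,X,X')` for the seller:
`y_{σ∧τ} − Q_{στ} ∈ K_{σ∧τ}` for all stopping times `τ`. -/
def HedgesSeller (M : Market Ω d T) (Y X X' : ℕ → Ω → Fin d → ℝ) (σ : Ω → ℕ)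
    (y : ℕ → Ω → Fin d → ℝ) : Prop :=
  ∀ τ, IsStoppingTime M.F T τ → ∀ ω,
    y (min (σ ω) (τ ω)) ω - payoffQ Y X X' (σ ω) (τ ω) ω ∈ M.cone (min (σ ω) (τ ω)) ω

/-- `(τ,y)` hedges the game option `(Y,X,X')` for the buyer:
`y_{σ∧τ} + Q_{στ} ∈ K_{σ∧τ}` for all stopping times `σ`. -/
def HedgesBuyer (M : Market Ω d T) (Y X X' : ℕ → Ω → Fin d → ℝ) (τ : Ω → ℕ)
    (y : ℕ → Ω → Fin d → ℝ) : Prop :=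
  ∀ σ, IsStoppingTime M.F T σ → ∀ ω,
    y (min (σ ω) (τ ω)) ω + payoffQ Y X X' (σ ω) (τ ω) ω ∈ M.cone (min (σ ω) (τ ω)) ω

/-- The seller's sets `Z^a_t` (pointwise at each `ω`), by backward induction:
`Z^a_T = X'_T + K_T` and
`Z^a_t = ((Z^a_{t+1} ∩ L_t) + K_t) ∩ (Y_t + K_t) ∪ (X_t + K_t)` for `t < T`. -/
def Za (M : Market Ω d T) (Y X X' : ℕ → Ω → Fin d → ℝ) (t : ℕ) (ω : Ω) :
    Set (Fin d → ℝ) :=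
  if T ≤ t then {v | v - X' T ω ∈ M.cone T ω}
  else (({v : Fin d → ℝ | ∀ ω' ∈ atomOf (M.F t) ω, v ∈ Za M Y X X' (t + 1) ω'}
          + M.cone t ω)
        ∩ {v | v - Y t ω ∈ M.cone t ω})
      ∪ {v | v - X t ω ∈ M.cone t ω}
termination_by T - t
decreasing_by omega

/-- The seller's set `Y^a_t = Y_t + K_t` (pointwise). -/
def YaSet (M : Market Ω d T) (Y : ℕ → Ω → Fin d → ℝ) (t : ℕ) (ω : Ω) :
    Set (Fin d → ℝ) :=
  {v | v - Y t ω ∈ M.cone t ω}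

/-- The seller's set `X^a_t` (pointwise): `X_t + K_t` for `t < T`, `X'_T + K_T` at `T`. -/
def XaSet (M : Market Ω d T) (X X' : ℕ → Ω → Fin d → ℝ) (t : ℕ) (ω : Ω) :
    Set (Fin d → ℝ) :=
  if T ≤ t then {v | v - X' T ω ∈ M.cone T ω} else {v | v - X t ω ∈ M.cone t ω}

/-- The seller's set `W^a_t = Z^a_{t+1} ∩ L_t` (pointwise: intersection over the atom). -/
def WaSet (M : Market Ω d T) (Y X X' : ℕ → Ω → Fin d → ℝ) (t : ℕ) (ω : Ω) :
    Set (Fin d → ℝ) :=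
  if T ≤ t then Set.univ
  else {v | ∀ ω' ∈ atomOf (M.F t) ω, v ∈ Za M Y X X' (t + 1) ω'}

/-- The seller's set `V^a_t = W^a_t + K_t` (pointwise). -/
def VaSet (M : Market Ω d T) (Y X X' : ℕ → Ω → Fin d → ℝ) (t : ℕ) (ω : Ω) :
    Set (Fin d → ℝ) :=
  if T ≤ t then Set.univ else WaSet M Y X X' t ω + M.cone t ω

/-- The ask (seller's) price of the game option in currency `i`. -/
def askPrice (M : Market Ω d T) (Y X X' : ℕ → Ω → Fin d → ℝ) (i : Fin d) : ℝ :=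
  sInf {z : ℝ | ∃ σ y, IsStoppingTime M.F T σ ∧ M.SelfFinancing y ∧
    HedgesSeller M Y X X' σ y ∧ y 0 = fun _ => z • eVec i}

/-- The bid (buyer's) price of the game option in currency `i`. -/
def bidPrice (M : Market Ω d T) (Y X X' : ℕ → Ω → Fin d → ℝ) (i : Fin d) : ℝ :=
  sSup {w : ℝ | ∃ z : ℝ, ∃ τ y, IsStoppingTime M.F T τ ∧ M.SelfFinancing y ∧
    HedgesBuyer M Y X X' τ y ∧ y 0 = (fun _ => z • eVec i) ∧ w = -z}

/-!
Swapping the roles of the two parties: the payoff of `(−X,−Y,−X')` with its two arguments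
exchanged is `−Q`, so `(τ, y)` hedges `(Y,X,X')` for the buyer exactly when it hedges
`(−X,−Y,−X')` for the seller, whence `π^b_i(Y,X,X') = −π^a_i(−X,−Y,−X')`.

It remains to identify the seller's hedging endowments with the points of `Z^a_0`. A seller's
hedge stays in `Z^a_t` up to its exercise time `σ`: at `σ` it dominates `X_σ` (or `X'_T`), and
before `σ` it dominates `Y_t` and, being predictable and self-financing, lies in
`Z^a_{t+1} ∩ L_t + K_t`. Conversely, from a point of `Z^a_0`, rebalance at each step into
`W^a_t = Z^a_{t+1} ∩ L_t` and exercise at the first time the portfolio dominates `X_t`; up to that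
time the portfolio stays in `Z^a_t`, which is all that hedging requires.
-/

section Atoms

variable {α : Type*} {m m' : MeasurableSpace α} {a b : α}

lemma atomOf_eq_measurableAtom : atomOf m a = @measurableAtom α m a := by
  ext b
  simp only [atomOf, measurableAtom, Set.mem_iInter]
  exact ⟨fun h s ha hs => h s hs ha, fun h s hs ha => h s ha hs⟩

lemma mem_atomOf_self : a ∈ atomOf m a := fun _ _ h => h

lemma atomOf_mono (h : m ≤ m') : atomOf m' a ⊆ atomOf m a :=
  fun _ hb s hs ha => hb s (h s hs) ha

lemma atomOf_eq_of_mem (h : b ∈ atomOf m a) : atomOf m b = atomOf m a := by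
  simp only [atomOf_eq_measurableAtom] at h ⊢
  exact @measurableAtom_eq_of_mem α m b a h

lemma measurableSet_atomOf [Countable α] : MeasurableSet[m] (atomOf m a) := by
  rw [atomOf_eq_measurableAtom]
  exact @MeasurableSet.measurableAtom_of_countable α m _ a

lemma measurableSet_of_forall_atomOf_subset [Countable α] {s : Set α}
    (h : ∀ a ∈ s, atomOf m a ⊆ s) : MeasurableSet[m] s := by
  have hs : s = ⋃ a ∈ s, atomOf m a :=
    subset_antisymm (fun a ha => Set.mem_biUnion ha mem_atomOf_self) (Set.iUnion₂_subset h)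
  rw [hs]
  exact MeasurableSet.biUnion (Set.to_countable s) fun _ _ => measurableSet_atomOf

lemma measurable_of_forall_mem_atomOf [Countable α] {β : Type*} [MeasurableSpace β] {f : α → β}
    (h : ∀ a, ∀ b ∈ atomOf m a, f b = f a) : Measurable[m] f := fun s _ =>
  measurableSet_of_forall_atomOf_subset fun a ha b hb => by
    simpa only [Set.mem_preimage, h a b hb] using ha

lemma Measurable.eq_of_mem_atomOf {β : Type*} [MeasurableSpace β] [MeasurableSingletonClass β]
    {f : α → β} (hf : Measurable[m] f) (h : b ∈ atomOf m a) : f b = f a :=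
  h _ (hf (measurableSet_singleton (f a))) rfl

end Atoms

section StoppingTimes

variable {α : Type*} {F : ℕ → MeasurableSpace α}

open Classical

lemma isStoppingTime_const {n c : ℕ} (hc : c ≤ n) : IsStoppingTime F n fun _ => c := by
  refine ⟨fun _ => hc, fun t => ?_⟩
  by_cases h : c ≤ t <;> simp [h]

lemma IsStoppingTime.lt_of_mem_atomOf {n : ℕ} {σ : α → ℕ} (hσ : IsStoppingTime F n σ) {t : ℕ}
    {a b : α} (hb : b ∈ atomOf (F t) a) (ha : t < σ a) : t < σ b := by
  simpa using hb _ (hσ.2 t).compl (by simpa using ha)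

def hitTime (n : ℕ) (A : ℕ → Set α) (a : α) : ℕ :=
  if h : ∃ s, s < n ∧ a ∈ A s then Nat.find h else n

variable {n : ℕ} {A : ℕ → Set α} {a : α}

lemma hitTime_le : hitTime n A a ≤ n := by
  unfold hitTime
  split_ifs with h
  · exact (Nat.find_spec h).1.le
  · exact le_rfl

lemma notMem_of_lt_hitTime {s : ℕ} (hs : s < hitTime n A a) : a ∉ A s := by
  unfold hitTime at hs
  split_ifs at hs with h
  · exact fun has => Nat.find_min h hs ⟨hs.trans (Nat.find_spec h).1, has⟩
  · exact fun has => h ⟨s, hs, has⟩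

lemma mem_of_hitTime_lt (h : hitTime n A a < n) : a ∈ A (hitTime n A a) := by
  unfold hitTime at h ⊢
  split_ifs at h ⊢ with hex
  · exact (Nat.find_spec hex).2
  · exact absurd h (lt_irrefl n)

lemma hitTime_le_iff {t : ℕ} (ht : t < n) : hitTime n A a ≤ t ↔ ∃ s ≤ t, a ∈ A s := by
  unfold hitTime
  split_ifs with h
  · rw [Nat.find_le_iff]
    exact ⟨fun ⟨s, hst, _, hs⟩ => ⟨s, hst, hs⟩, fun ⟨s, hst, hs⟩ => ⟨s, hst, by omega, hs⟩⟩
  · exact ⟨fun hn => absurd ht (by omega), fun ⟨s, hst, hs⟩ => absurd ⟨s, by omega, hs⟩ h⟩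

lemma isStoppingTime_hitTime [Countable α] (hF : Monotone F)
    (hA : ∀ s < n, MeasurableSet[F s] (A s)) : IsStoppingTime F n (hitTime n A) := by
  refine ⟨fun _ => hitTime_le, fun t => ?_⟩
  rcases lt_or_ge t n with ht | ht
  · have hset : {a | hitTime n A a ≤ t} = ⋃ s ∈ Set.Iic t, A s := by
      ext a
      simp [hitTime_le_iff ht]
    rw [hset]
    exact MeasurableSet.biUnion (Set.to_countable _) fun s hs => hF hs _ (hA s (hs.trans_lt ht))
  · simp [hitTime_le.trans ht]

end StoppingTimes

section Cones

variable {π : Fin d → Fin d → ℝ}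

lemma zero_mem_solvencyCone : (0 : Fin d → ℝ) ∈ solvencyCone π :=
  ⟨0, 0, fun _ => le_rfl, fun _ _ => le_rfl, by simp⟩

lemma add_mem_solvencyCone {x y : Fin d → ℝ} (hx : x ∈ solvencyCone π)
    (hy : y ∈ solvencyCone π) : x + y ∈ solvencyCone π := by
  obtain ⟨a, b, ha, hb, rfl⟩ := hx
  obtain ⟨a', b', ha', hb', rfl⟩ := hy
  refine ⟨a + a', b + b', fun i => add_nonneg (ha i) (ha' i),
    fun i j => add_nonneg (hb i j) (hb' i j), ?_⟩
  simp only [Pi.add_apply, add_smul, Finset.sum_add_distrib]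
  abel

end Cones

section Payoff

variable {α : Type*} (Y X X' : ℕ → α → Fin d → ℝ) (ω : α)

lemma payoffQ_of_lt {s t : ℕ} (h : t < s) : payoffQ Y X X' s t ω = Y t ω := if_pos h

lemma payoffQ_of_gt {s t : ℕ} (h : s < t) : payoffQ Y X X' s t ω = X s ω := by
  rw [payoffQ, if_neg h.not_gt, if_pos h]

lemma payoffQ_self (s : ℕ) : payoffQ Y X X' s s ω = X' s ω := by
  simp [payoffQ]

lemma payoffQ_neg_swap (s t : ℕ) :
    payoffQ (fun u a => -X u a) (fun u a => -Y u a) (fun u a => -X' u a) t s ω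
      = -payoffQ Y X X' s t ω := by
  rcases lt_trichotomy s t with h | rfl | h
  · rw [payoffQ_of_lt _ _ _ _ h, payoffQ_of_gt _ _ _ _ h]
  · rw [payoffQ_self, payoffQ_self]
  · rw [payoffQ_of_gt _ _ _ _ h, payoffQ_of_lt _ _ _ _ h]

end Payoff

namespace Market

variable (M : Market Ω d T)

lemma cone_eq_of_mem_atomOf {t : ℕ} (ht : t ≤ T) {ω ω' : Ω} (h : ω' ∈ atomOf (M.F t) ω) :
    M.cone t ω' = M.cone t ω := by
  simp only [Market.cone, fun i j => (M.pi_meas t ht i j).eq_of_mem_atomOf h]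

lemma sub_mem_cone_trans {t : ℕ} {ω : Ω} {x y z : Fin d → ℝ} (hxy : x - y ∈ M.cone t ω)
    (hyz : y - z ∈ M.cone t ω) : x - z ∈ M.cone t ω :=
  sub_add_sub_cancel x y z ▸ add_mem_solvencyCone hxy hyz

end Market

section SellerSets

variable (M : Market Ω d T) (Y X X' : ℕ → Ω → Fin d → ℝ) {t : ℕ} {ω : Ω}

lemma Za_self : Za M Y X X' T ω = XaSet M X X' T ω := by
  rw [Za, XaSet]; simp

lemma Za_of_lt (ht : t < T) :
    Za M Y X X' t ω = VaSet M Y X X' t ω ∩ YaSet M Y t ω ∪ XaSet M X X' t ω := by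
  rw [Za, VaSet, WaSet, XaSet]; simp [YaSet, ht.not_ge]

lemma mem_WaSet_of_lt (ht : t < T) {v : Fin d → ℝ} :
    v ∈ WaSet M Y X X' t ω ↔ ∀ ω' ∈ atomOf (M.F t) ω, v ∈ Za M Y X X' (t + 1) ω' := by
  simp [WaSet, ht.not_ge]

lemma VaSet_of_lt (ht : t < T) : VaSet M Y X X' t ω = WaSet M Y X X' t ω + M.cone t ω := by
  simp [VaSet, ht.not_ge]

lemma mem_XaSet_of_lt (ht : t < T) {v : Fin d → ℝ} :
    v ∈ XaSet M X X' t ω ↔ v - X t ω ∈ M.cone t ω := by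
  simp [XaSet, ht.not_ge]

end SellerSets

section SellerHedges

variable {M : Market Ω d T} {Y X X' : ℕ → Ω → Fin d → ℝ} {σ : Ω → ℕ}
  {y : ℕ → Ω → Fin d → ℝ}

lemma HedgesSeller.mem_YaSet (hedge : HedgesSeller M Y X X' σ y) {ω : Ω} (hσ : σ ω ≤ T)
    {t : ℕ} (ht : t < σ ω) : y t ω ∈ YaSet M Y t ω := by
  have h := hedge _ (isStoppingTime_const (ht.le.trans hσ)) ω
  rwa [min_eq_right ht.le, payoffQ_of_lt _ _ _ _ ht] at h

lemma HedgesSeller.mem_XaSet (hedge : HedgesSeller M Y X X' σ y) {ω : Ω} (hσ : σ ω ≤ T) :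
    y (σ ω) ω ∈ XaSet M X X' (σ ω) ω := by
  have h := hedge _ (isStoppingTime_const le_rfl) ω
  rw [min_eq_left hσ] at h
  rcases hσ.lt_or_eq with hlt | heq
  · rwa [payoffQ_of_gt _ _ _ _ hlt, ← mem_XaSet_of_lt M X X' hlt] at h
  · rw [heq, payoffQ_self] at h
    simpa [XaSet, heq] using h

lemma hedgesSeller_of_mem_YaSet_of_mem_XaSet
    (hXX' : ∀ t < T, ∀ ω, X t ω - X' t ω ∈ M.cone t ω) (hσ : ∀ ω, σ ω ≤ T)
    (hY : ∀ ω, ∀ t < σ ω, y t ω ∈ YaSet M Y t ω)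
    (hX : ∀ ω, y (σ ω) ω ∈ XaSet M X X' (σ ω) ω) : HedgesSeller M Y X X' σ y := by
  intro τ hτ ω
  rcases lt_trichotomy (τ ω) (σ ω) with hlt | heq | hgt
  · rw [min_eq_right hlt.le, payoffQ_of_lt _ _ _ _ hlt]
    exact hY ω _ hlt
  · rw [heq, min_self, payoffQ_self]
    rcases (hσ ω).lt_or_eq with hlt | hT
    · exact M.sub_mem_cone_trans ((mem_XaSet_of_lt M X X' hlt).1 (hX ω)) (hXX' _ hlt ω)
    · simpa [XaSet, hT] using hX ω
  · have hlt : σ ω < T := hgt.trans_le (hτ.1 ω)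
    rw [min_eq_left hgt.le, payoffQ_of_gt _ _ _ _ hgt, ← mem_XaSet_of_lt M X X' hlt]
    exact hX ω

lemma HedgesSeller.mem_Za (hσ : IsStoppingTime M.F T σ) (hy : M.SelfFinancing y)
    (hedge : HedgesSeller M Y X X' σ y) {t : ℕ} (ht : t ≤ T) {ω : Ω} (htσ : t ≤ σ ω) :
    y t ω ∈ Za M Y X X' t ω := by
  induction ht using Nat.decreasingInduction generalizing ω with
  | self =>
    have hT : σ ω = T := le_antisymm (hσ.1 ω) htσ
    simpa only [Za_self, hT] using hedge.mem_XaSet (hσ.1 ω)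
  | of_succ t ht ih =>
    rw [Za_of_lt M Y X X' ht]
    rcases htσ.eq_or_lt with rfl | hlt
    · exact Or.inr (hedge.mem_XaSet (hσ.1 ω))
    refine Or.inl ⟨?_, hedge.mem_YaSet (hσ.1 ω) hlt⟩
    have hW : y (t + 1) ω ∈ WaSet M Y X X' t ω := by
      refine (mem_WaSet_of_lt M Y X X' ht).2 fun ω' hω' => ?_
      rw [← (hy.2.1 t ht).eq_of_mem_atomOf hω']
      exact ih (hσ.lt_of_mem_atomOf hω' hlt)
    rw [VaSet_of_lt M Y X X' ht]
    exact ⟨_, hW, _, hy.2.2 t ht ω, add_sub_cancel _ _⟩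

end SellerHedges

section Rebalance

variable {E : Type*} [AddCommGroup E] (A K : Set E) (x : E)

open Classical in
def rebalance : E :=
  if h : x ∈ A + K then (Set.mem_add.mp h).choose else x

variable {A K x}

lemma rebalance_mem (h : x ∈ A + K) : rebalance A K x ∈ A := by
  rw [rebalance, dif_pos h]
  exact (Set.mem_add.mp h).choose_spec.1

lemma sub_rebalance_mem (hK : (0 : E) ∈ K) : x - rebalance A K x ∈ K := by
  unfold rebalance
  split_ifs with h
  · obtain ⟨-, k, hk, hsum⟩ := (Set.mem_add.mp h).choose_spec
    rwa [sub_eq_of_eq_add' hsum.symm]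
  · rwa [sub_self]

end Rebalance

def sellerStrategy (M : Market Ω d T) (Y X X' : ℕ → Ω → Fin d → ℝ) (v : Fin d → ℝ) :
    ℕ → Ω → Fin d → ℝ
  | 0 => fun _ => v
  | t + 1 => fun ω => rebalance (WaSet M Y X X' t ω) (M.cone t ω) (sellerStrategy M Y X X' v t ω)

section SellerStrategy

variable (M : Market Ω d T) (Y X X' : ℕ → Ω → Fin d → ℝ) (v : Fin d → ℝ)

local notation "y" => sellerStrategy M Y X X' v

lemma sellerStrategy_sub_succ_mem_cone (t : ℕ) (ω : Ω) : y t ω - y (t + 1) ω ∈ M.cone t ω :=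
  sub_rebalance_mem zero_mem_solvencyCone

lemma sellerStrategy_succ_mem_WaSet {t : ℕ} {ω : Ω} (h : y t ω ∈ VaSet M Y X X' t ω)
    (ht : t < T) : y (t + 1) ω ∈ WaSet M Y X X' t ω := by
  rw [VaSet_of_lt M Y X X' ht] at h
  exact rebalance_mem h

lemma sellerStrategy_succ_eq_of_mem_atomOf {t : ℕ} (ht : t ≤ T) {ω ω' : Ω}
    (h : ω' ∈ atomOf (M.F t) ω) : y (t + 1) ω' = y (t + 1) ω := by
  have hprev : y t ω' = y t ω := by
    cases t with
    | zero => rfl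
    | succ s =>
      exact sellerStrategy_succ_eq_of_mem_atomOf (by omega) (atomOf_mono (M.F_mono s _ s.le_succ) h)
  have hW : WaSet M Y X X' t ω' = WaSet M Y X X' t ω := by
    simp only [WaSet, atomOf_eq_of_mem h]
  simp only [sellerStrategy, hprev, hW, M.cone_eq_of_mem_atomOf ht h]

lemma measurable_sellerStrategy {t : ℕ} (ht : t ≤ T) : Measurable[M.F t] (y t) := by
  cases t with
  | zero => exact measurable_const
  | succ s =>
    refine measurable_of_forall_mem_atomOf fun ω ω' h => ?_
    exact sellerStrategy_succ_eq_of_mem_atomOf M Y X X' v (by omega)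
      (atomOf_mono (M.F_mono s _ s.le_succ) h)

lemma sellerStrategy_selfFinancing : M.SelfFinancing y :=
  ⟨measurable_const,
    fun _ ht => measurable_of_forall_mem_atomOf fun _ _ h =>
      sellerStrategy_succ_eq_of_mem_atomOf M Y X X' v ht.le h,
    fun t _ ω => sellerStrategy_sub_succ_mem_cone M Y X X' v t ω⟩

lemma sellerStrategy_mem_Za (hv : ∀ ω, v ∈ Za M Y X X' 0 ω) {t : ℕ} (ht : t ≤ T) {ω : Ω}
    (hX : ∀ s < t, y s ω ∉ XaSet M X X' s ω) : y t ω ∈ Za M Y X X' t ω := by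
  induction t with
  | zero => exact hv ω
  | succ t ih =>
    have hZ := ih (by omega) fun s hs => hX s (by omega)
    rw [Za_of_lt M Y X X' (by omega)] at hZ
    obtain ⟨hV, -⟩ := hZ.resolve_right (hX t (by omega))
    exact (mem_WaSet_of_lt M Y X X' (by omega)).1
      (sellerStrategy_succ_mem_WaSet M Y X X' v hV (by omega)) ω mem_atomOf_self

end SellerStrategy

section AskPrice

variable {M : Market Ω d T} {Y X X' : ℕ → Ω → Fin d → ℝ}

lemma IsGameOption.measurableSet_mem_XaSet (hGO : IsGameOption M Y X X')
    {y : ℕ → Ω → Fin d → ℝ} {t : ℕ} (ht : t < T) (hy : Measurable[M.F t] (y t)) :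
    MeasurableSet[M.F t] {ω | y t ω ∈ XaSet M X X' t ω} := by
  refine measurableSet_of_forall_atomOf_subset fun ω hω ω' h => ?_
  change y t ω ∈ XaSet M X X' t ω at hω
  change y t ω' ∈ XaSet M X X' t ω'
  rw [mem_XaSet_of_lt M X X' ht] at hω ⊢
  rwa [hy.eq_of_mem_atomOf h, (hGO.2.1 t ht.le).eq_of_mem_atomOf h,
    M.cone_eq_of_mem_atomOf ht.le h]

theorem IsGameOption.exists_hedgesSeller (hGO : IsGameOption M Y X X') {v : Fin d → ℝ}
    (hv : ∀ ω, v ∈ Za M Y X X' 0 ω) :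
    ∃ σ y, IsStoppingTime M.F T σ ∧ M.SelfFinancing y ∧ HedgesSeller M Y X X' σ y ∧
      y 0 = fun _ => v := by
  set y := sellerStrategy M Y X X' v
  set σ := hitTime T fun t => {ω | y t ω ∈ XaSet M X X' t ω}
  have hZ : ∀ ω, ∀ t ≤ σ ω, y t ω ∈ Za M Y X X' t ω := fun ω t ht =>
    sellerStrategy_mem_Za M Y X X' v hv (ht.trans hitTime_le)
      fun s hs => notMem_of_lt_hitTime (hs.trans_le ht)
  refine ⟨σ, y, isStoppingTime_hitTime (fun s t => M.F_mono s t) fun t ht =>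
      hGO.measurableSet_mem_XaSet ht (measurable_sellerStrategy M Y X X' v ht.le),
    sellerStrategy_selfFinancing M Y X X' v,
    hedgesSeller_of_mem_YaSet_of_mem_XaSet (fun t ht ω => (hGO.2.2.2 t ω ht.le).1)
      (fun _ => hitTime_le) (fun ω t ht => ?_) (fun ω => ?_), rfl⟩
  · have hT : t < T := ht.trans_le hitTime_le
    have h := hZ ω t ht.le
    rw [Za_of_lt M Y X X' hT] at h
    exact (h.resolve_right (notMem_of_lt_hitTime ht)).2
  · have hσT : σ ω ≤ T := hitTime_le
    rcases hσT.lt_or_eq with hlt | hT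
    · exact mem_of_hitTime_lt hlt
    · have h := hZ ω _ le_rfl
      rw [hT, Za_self] at h
      rwa [hT]

theorem IsGameOption.askPrice_eq_sInf_Za (hGO : IsGameOption M Y X X') (i : Fin d) :
    askPrice M Y X X' i = sInf {z : ℝ | (z • eVec i : Fin d → ℝ) ∈ ⋂ ω, Za M Y X X' 0 ω} := by
  rw [askPrice]
  congr 1
  ext z
  simp only [Set.mem_iInter]
  refine ⟨fun ⟨σ, y, hσ, hy, hedge, hy0⟩ ω => ?_, hGO.exists_hedgesSeller⟩
  simpa [hy0] using hedge.mem_Za hσ hy (Nat.zero_le T) (Nat.zero_le (σ ω))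

lemma IsGameOption.neg (hGO : IsGameOption M Y X X') :
    IsGameOption M (fun t ω => -X t ω) (fun t ω => -Y t ω) (fun t ω => -X' t ω) := by
  obtain ⟨hY, hX, hX', hcone⟩ := hGO
  refine ⟨fun t ht => (hX t ht).neg, fun t ht => (hY t ht).neg, fun t ht => (hX' t ht).neg,
    fun t ω ht => ?_⟩
  rw [neg_sub_neg, neg_sub_neg]
  exact (hcone t ω ht).symm

end AskPrice

lemma hedgesBuyer_iff_hedgesSeller_neg (M : Market Ω d T) (Y X X' : ℕ → Ω → Fin d → ℝ)
    (τ : Ω → ℕ) (y : ℕ → Ω → Fin d → ℝ) :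
    HedgesBuyer M Y X X' τ y ↔
      HedgesSeller M (fun t ω => -X t ω) (fun t ω => -Y t ω) (fun t ω => -X' t ω) τ y := by
  refine forall₃_congr fun σ _ ω => ?_
  rw [min_comm, payoffQ_neg_swap, sub_neg_eq_add]

lemma bidPrice_eq_neg_askPrice (M : Market Ω d T) (Y X X' : ℕ → Ω → Fin d → ℝ) (i : Fin d) :
    bidPrice M Y X X' i
      = -askPrice M (fun t ω => -X t ω) (fun t ω => -Y t ω) (fun t ω => -X' t ω) i := by
  rw [bidPrice, askPrice, Real.sInf_def, neg_neg]
  congr 1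
  ext w
  simp only [Set.mem_neg, hedgesBuyer_iff_hedgesSeller_neg]
  constructor
  · rintro ⟨z, τ, y, hτ, hy, hedge, hy0, rfl⟩
    exact ⟨τ, y, hτ, hy, hedge, by simp [hy0]⟩
  · rintro ⟨τ, y, hτ, hy, hedge, hy0⟩
    exact ⟨-w, τ, y, hτ, hy, hedge, hy0, (neg_neg w).symm⟩

/-- The bid price of the game option `(Y,X,X')` satisfies
`π^b_i(Y,X,X') = −π^a_i(−X,−Y,−X') = −inf{z ∈ ℝ : z e^i ∈ Z^b_0}`, where
`Z^b_0` is the initial set of the buyer's backward construction (i.e. the seller's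
construction applied to the game option `(−X,−Y,−X')`). -/
theorem bidPrice_eq_neg_askPrice_neg {Ω : Type*} [Fintype Ω] {d T : ℕ}
    (M : Market Ω d T) (Y X X' : ℕ → Ω → Fin d → ℝ) (hGO : IsGameOption M Y X X')
    (i : Fin d) :
    bidPrice M Y X X' i
        = -askPrice M (fun t ω => -X t ω) (fun t ω => -Y t ω) (fun t ω => -X' t ω) i ∧
    bidPrice M Y X X' i
        = -sInf {z : ℝ | (z • eVec i : Fin d → ℝ) ∈
            ⋂ ω, Za M (fun t ω' => -X t ω') (fun t ω' => -Y t ω') (fun t ω' => -X' t ω')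
              0 ω} := by
  rw [bidPrice_eq_neg_askPrice, hGO.neg.askPrice_eq_sInf_Za]
  exact ⟨rfl, rfl⟩
end
end

section
/- For any game option (Y,X,X'), any σ ∈ T, any χ ∈ X and any adapted ℝ^d-valued process S, the following pointwise identity holds: (H_σ·S)_{χ∧σ} = (Q_{σ·}·S_{σ∧·})_χ + χ_σ 1_{{σ<T}} (X_σ − X'_σ)·S_σ, where H_σ·S = (H_{σt}·S_t)_{t=0}^T and Q_{σ·}·S_{σ∧·} = (Q_{σt}·S_{σ∧t})_{t=0}^T. -/
open Pointwise
open scoped MeasureTheory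

noncomputable section

variable {Ω : Type*}

variable [Fintype Ω] {d T : ℕ}

/-- The pointwise identity
`(H_σ·S)_{χ∧σ} = (Q_{σ·}·S_{σ∧·})_χ + χ_σ 1_{σ<T} (X_σ − X'_σ)·S_σ`
for adapted processes `Y, X, X', S`, a stopping time `σ` and a randomised stopping
time `χ`. -/
theorem HS_value_identity {Ω : Type*} [Fintype Ω] {d : ℕ}
    (F : ℕ → MeasurableSpace Ω) (T : ℕ)
    (hF_mono : ∀ s t : ℕ, s ≤ t → F s ≤ F t) (hF_zero : F 0 = ⊥) (hF_top : F T = ⊤)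
    (Y X X' S : ℕ → Ω → Fin d → ℝ)
    (hY : ∀ t, t ≤ T → Measurable[F t] (Y t))
    (hX : ∀ t, t ≤ T → Measurable[F t] (X t))
    (hX' : ∀ t, t ≤ T → Measurable[F t] (X' t))
    (hS : ∀ t, t ≤ T → Measurable[F t] (S t))
    (σ : Ω → ℕ) (hσ : IsStoppingTime F T σ)
    (χ : ℕ → Ω → ℝ) (hχ : IsRandomisedST F T χ) :
    ∀ ω, valAt T (trunc T χ σ)
          (fun t ω' => dotp (payoffH T Y X X' (σ ω') t ω') (S t ω')) ω
      = valAt T χ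
          (fun t ω' => dotp (payoffQ Y X X' (σ ω') t ω') (S (min (σ ω') t) ω')) ω
        + χ (σ ω) ω * (if σ ω < T then (1 : ℝ) else 0)
            * dotp (X (σ ω) ω - X' (σ ω) ω) (S (σ ω) ω) := by
  intro ω
  have hsT : σ ω ≤ T := hσ.1 ω
  have hsplit : ∀ (f : ℕ → ℝ), ∑ t ∈ Finset.range (T+1), f t
      = (∑ t ∈ Finset.Ico 0 (σ ω), f t) + ∑ t ∈ Finset.Ico (σ ω) (T+1), f t := by
    intro f
    rw [Finset.range_eq_Ico, ← Finset.sum_Ico_consecutive _ (Nat.zero_le (σ ω)) (by omega)]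
  unfold valAt
  rw [hsplit, hsplit]
  have hL1 : ∑ t ∈ Finset.Ico 0 (σ ω),
      trunc T χ σ t ω * dotp (payoffH T Y X X' (σ ω) t ω) (S t ω)
      = ∑ t ∈ Finset.Ico 0 (σ ω), χ t ω * dotp (Y t ω) (S t ω) := by
    apply Finset.sum_congr rfl
    intro t ht
    simp only [Finset.mem_Ico] at ht
    simp [trunc, payoffH, ht.2]
  have hR1 : ∑ t ∈ Finset.Ico 0 (σ ω),
      χ t ω * dotp (payoffQ Y X X' (σ ω) t ω) (S (min (σ ω) t) ω)
      = ∑ t ∈ Finset.Ico 0 (σ ω), χ t ω * dotp (Y t ω) (S t ω) := by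
    apply Finset.sum_congr rfl
    intro t ht
    simp only [Finset.mem_Ico] at ht
    simp [payoffQ, ht.2, Nat.min_eq_right (Nat.le_of_lt ht.2), Nat.not_lt.mpr (Nat.le_of_lt ht.2)]
  have hL2 : ∑ t ∈ Finset.Ico (σ ω) (T+1),
      trunc T χ σ t ω * dotp (payoffH T Y X X' (σ ω) t ω) (S t ω)
      = chiStar T χ (σ ω) ω *
          dotp (if σ ω < T then X (σ ω) ω else X' (σ ω) ω) (S (σ ω) ω) := by
    rw [Finset.sum_eq_single_of_mem (σ ω) (by simp [Finset.mem_Ico]; omega)]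
    · by_cases hlt : σ ω < T
      · simp [trunc, payoffH, hlt]
      · have : σ ω = T := by omega
        simp [trunc, payoffH, hlt, this]
    · intro t ht hne
      simp only [Finset.mem_Ico] at ht
      have h1 : ¬ t < σ ω := by omega
      simp [trunc, h1, hne]
  have hR2 : ∑ t ∈ Finset.Ico (σ ω) (T+1),
      χ t ω * dotp (payoffQ Y X X' (σ ω) t ω) (S (min (σ ω) t) ω)
      = χ (σ ω) ω * dotp (X' (σ ω) ω) (S (σ ω) ω)
        + chiStar T χ (σ ω + 1) ω * dotp (X (σ ω) ω) (S (σ ω) ω) := by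
    rw [Finset.sum_eq_sum_Ico_succ_bot (by omega)]
    congr 1
    · simp [payoffQ]
    · have : ∀ t ∈ Finset.Ico (σ ω + 1) (T+1),
          χ t ω * dotp (payoffQ Y X X' (σ ω) t ω) (S (min (σ ω) t) ω)
          = χ t ω * dotp (X (σ ω) ω) (S (σ ω) ω) := by
        intro t ht
        simp only [Finset.mem_Ico] at ht
        have h1 : σ ω < t := by omega
        simp [payoffQ, h1, Nat.not_lt.mpr (Nat.le_of_lt h1), Nat.min_eq_left (Nat.le_of_lt h1)]
      rw [Finset.sum_congr rfl this, ← Finset.sum_mul, chiStar, Finset.Ico_add_one_right_eq_Icc]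
  rw [hL1, hR1, hL2, hR2]
  have hstar : chiStar T χ (σ ω) ω = χ (σ ω) ω + chiStar T χ (σ ω + 1) ω := by
    rw [chiStar, chiStar, ← Finset.Ico_add_one_right_eq_Icc, ← Finset.Ico_add_one_right_eq_Icc,
      Finset.sum_eq_sum_Ico_succ_bot (by omega)]
  by_cases hlt : σ ω < T
  · rw [hstar]
    simp only [hlt, if_pos]
    have : dotp (X (σ ω) ω - X' (σ ω) ω) (S (σ ω) ω)
        = dotp (X (σ ω) ω) (S (σ ω) ω) - dotp (X' (σ ω) ω) (S (σ ω) ω) := by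
      simp [dotp, Finset.sum_sub_distrib, sub_mul]
    rw [this]
    ring
  · have hT : σ ω = T := by omega
    have h0 : chiStar T χ (σ ω + 1) ω = 0 := by
      rw [chiStar, hT, Finset.Icc_eq_empty (by omega), Finset.sum_empty]
    rw [h0, hstar, h0]
    rw [if_neg hlt, if_neg hlt]
    ring
end
end

section
/- Let (Y,X,X') be a game option, σ ∈ T, χ ∈ X, and let S be an adapted ℝ^d-valued process with S_t ∈ K*_t for all t. Then pointwise (H_σ·S)_{χ∧σ} ≥ (Q_{σ·}·S_{σ∧·})_χ. Moreover, defining χ' ∈ X by χ'_t = χ_t 1_{{t<σ}} + χ*_σ 1_{{t=T}}, one has χ∧σ = χ'∧σ and (H_σ·S)_{χ∧σ} = (Q_{σ·}·S_{σ∧·})_{χ'}. -/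
open Pointwise
open scoped MeasureTheory

noncomputable section

variable {Ω : Type*}

variable [Fintype Ω] {d T : ℕ}

lemma dotp_comm' {d : ℕ} (x y : Fin d → ℝ) : dotp x y = dotp y x := by
  simp [dotp, mul_comm]

lemma dotp_sub_left' {d : ℕ} (x y z : Fin d → ℝ) :
    dotp (x - y) z = dotp x z - dotp y z := by
  simp [dotp, sub_mul, Finset.sum_sub_distrib]

lemma sum_split_at {s T : ℕ} (h : s ≤ T) (f : ℕ → ℝ) :
    ∑ t ∈ Finset.range (T+1), f t
      = (∑ t ∈ Finset.range s, f t) + f s + ∑ t ∈ Finset.Icc (s+1) T, f t := by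
  have h2 : Finset.range (T+1) = Finset.range (s+1) ∪ Finset.Icc (s+1) T := by
    ext x; simp only [Finset.mem_range, Finset.mem_Icc, Finset.mem_union]; omega
  have hd : Disjoint (Finset.range (s+1)) (Finset.Icc (s+1) T) := by
    rw [Finset.disjoint_left]
    intro a ha hb
    simp only [Finset.mem_range] at ha
    simp only [Finset.mem_Icc] at hb
    omega
  rw [h2, Finset.sum_union hd, Finset.sum_range_succ]

lemma chiStar_top_succ {Ω : Type*} (T : ℕ) (χ : ℕ → Ω → ℝ) (ω : Ω) :
    chiStar T χ (T+1) ω = 0 := by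
  simp [chiStar, Finset.Icc_eq_empty (by omega : ¬ T + 1 ≤ T)]

lemma chiStar_step {Ω : Type*} {T s : ℕ} (h : s ≤ T) (χ : ℕ → Ω → ℝ) (ω : Ω) :
    chiStar T χ s ω = χ s ω + chiStar T χ (s+1) ω := by
  unfold chiStar
  have hins : Finset.Icc s T = insert s (Finset.Icc (s+1) T) := by
    ext x; simp only [Finset.mem_Icc, Finset.mem_insert]; omega
  rw [hins, Finset.sum_insert (by simp only [Finset.mem_Icc]; omega)]

/-- For a game option `(Y,X,X')`, `σ ∈ T`, `χ ∈ X` and an adapted process `S` with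
`S_t ∈ K*_t`: pointwise `(H_σ·S)_{χ∧σ} ≥ (Q_{σ·}·S_{σ∧·})_χ`; moreover with
`χ'_t = χ_t 1_{t<σ} + χ*_σ 1_{t=T}` one has `χ' ∈ X`, `χ∧σ = χ'∧σ` and
`(H_σ·S)_{χ∧σ} = (Q_{σ·}·S_{σ∧·})_{χ'}`. -/
theorem HS_value_ge_and_eq {Ω : Type*} [Fintype Ω] {d T : ℕ}
    (M : Market Ω d T) (Y X X' : ℕ → Ω → Fin d → ℝ) (hGO : IsGameOption M Y X X')
    (σ : Ω → ℕ) (hσ : IsStoppingTime M.F T σ)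
    (χ : ℕ → Ω → ℝ) (hχ : IsRandomisedST M.F T χ)
    (S : ℕ → Ω → Fin d → ℝ)
    (hS_adapted : ∀ t, t ≤ T → Measurable[M.F t] (S t))
    (hS : ∀ t ω, t ≤ T → S t ω ∈ posPolar (M.cone t ω)) :
    (∀ ω, valAt T χ
          (fun t ω' => dotp (payoffQ Y X X' (σ ω') t ω') (S (min (σ ω') t) ω')) ω
        ≤ valAt T (trunc T χ σ)
            (fun t ω' => dotp (payoffH T Y X X' (σ ω') t ω') (S t ω')) ω) ∧
    IsRandomisedST M.F T (chiPrime T χ σ) ∧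
    (∀ t, t ≤ T → ∀ ω, trunc T χ σ t ω = trunc T (chiPrime T χ σ) σ t ω) ∧
    (∀ ω, valAt T (trunc T χ σ)
          (fun t ω' => dotp (payoffH T Y X X' (σ ω') t ω') (S t ω')) ω
        = valAt T (chiPrime T χ σ)
            (fun t ω' => dotp (payoffQ Y X X' (σ ω') t ω') (S (min (σ ω') t) ω')) ω) := by
  obtain ⟨hχm, hχ0, hχ1⟩ := hχ
  have hsT : ∀ ω, σ ω ≤ T := hσ.1
  -- value of the Q-process at an arbitrary randomised stopping process ψ
  have hQ : ∀ ψ : ℕ → Ω → ℝ, ∀ ω,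
      valAt T ψ (fun t ω' => dotp (payoffQ Y X X' (σ ω') t ω') (S (min (σ ω') t) ω')) ω
        = (∑ t ∈ Finset.range (σ ω), ψ t ω * dotp (Y t ω) (S t ω))
          + ψ (σ ω) ω * dotp (X' (σ ω) ω) (S (σ ω) ω)
          + (∑ t ∈ Finset.Icc (σ ω + 1) T, ψ t ω) * dotp (X (σ ω) ω) (S (σ ω) ω) := by
    intro ψ ω
    unfold valAt
    rw [sum_split_at (hsT ω)]
    congr 1
    congr 1
    · refine Finset.sum_congr rfl (fun t ht => ?_)
      simp only [Finset.mem_range] at ht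
      simp [payoffQ, ht, min_eq_right ht.le]
    · simp [payoffQ]
    · rw [Finset.sum_mul]
      refine Finset.sum_congr rfl (fun t ht => ?_)
      simp only [Finset.mem_Icc] at ht
      have h1 : σ ω < t := by omega
      simp [payoffQ, h1, Nat.lt_asymm h1, min_eq_left h1.le]
  -- value of the H-process at the truncated randomised stopping time
  have hH : ∀ ω,
      valAt T (trunc T χ σ)
          (fun t ω' => dotp (payoffH T Y X X' (σ ω') t ω') (S t ω')) ω
        = (∑ t ∈ Finset.range (σ ω), χ t ω * dotp (Y t ω) (S t ω))
          + chiStar T χ (σ ω) ω *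
            (if σ ω < T then dotp (X (σ ω) ω) (S (σ ω) ω)
             else dotp (X' (σ ω) ω) (S (σ ω) ω)) := by
    intro ω
    unfold valAt
    rw [sum_split_at (hsT ω)]
    have h3 : ∑ t ∈ Finset.Icc (σ ω + 1) T,
        trunc T χ σ t ω * dotp (payoffH T Y X X' (σ ω) t ω) (S t ω) = 0 := by
      refine Finset.sum_eq_zero (fun t ht => ?_)
      simp only [Finset.mem_Icc] at ht
      have h1 : ¬ t < σ ω := by omega
      have h2 : t ≠ σ ω := by omega
      simp [trunc, h1, h2]
    rw [h3, add_zero]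
    congr 1
    · refine Finset.sum_congr rfl (fun t ht => ?_)
      simp only [Finset.mem_range] at ht
      simp [trunc, payoffH, ht]
    · by_cases hlt : σ ω < T
      · simp [trunc, payoffH, hlt]
      · have hT : σ ω = T := by have := hsT ω; omega
        simp [trunc, payoffH, hlt, hT]
  -- sum of chiPrime over the upper tail
  have hIcc' : ∀ ω, ∑ t ∈ Finset.Icc (σ ω + 1) T, chiPrime T χ σ t ω
      = if σ ω < T then chiStar T χ (σ ω) ω else 0 := by
    intro ω
    have h1 : ∑ t ∈ Finset.Icc (σ ω + 1) T, chiPrime T χ σ t ω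
        = ∑ t ∈ Finset.Icc (σ ω + 1) T,
            (if t = T then chiStar T χ (σ ω) ω else 0) := by
      refine Finset.sum_congr rfl (fun t ht => ?_)
      simp only [Finset.mem_Icc] at ht
      have h2 : ¬ t < σ ω := by omega
      simp [chiPrime, h2]
    rw [h1, Finset.sum_ite_eq' (Finset.Icc (σ ω + 1) T) T
      (fun _ => chiStar T χ (σ ω) ω)]
    simp only [Finset.mem_Icc]
    by_cases hlt : σ ω < T
    · rw [if_pos ⟨by omega, le_refl T⟩, if_pos hlt]
    · rw [if_neg (by omega), if_neg hlt]
  -- chiStar of chiPrime over the tail from σ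
  have hStar' : ∀ ω, chiStar T (chiPrime T χ σ) (σ ω) ω = chiStar T χ (σ ω) ω := by
    intro ω
    have h1 : chiStar T (chiPrime T χ σ) (σ ω) ω
        = ∑ t ∈ Finset.Icc (σ ω) T, (if t = T then chiStar T χ (σ ω) ω else 0) := by
      unfold chiStar
      refine Finset.sum_congr rfl (fun t ht => ?_)
      simp only [Finset.mem_Icc] at ht
      have h2 : ¬ t < σ ω := by omega
      simp [chiPrime, h2, chiStar]
    rw [h1, Finset.sum_ite_eq' (Finset.Icc (σ ω) T) T (fun _ => chiStar T χ (σ ω) ω),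
      if_pos (by simp only [Finset.mem_Icc]; exact ⟨hsT ω, le_refl T⟩)]
  refine ⟨?_, ⟨?_, ?_, ?_⟩, ?_, ?_⟩
  · -- the inequality
    intro ω
    rw [hQ χ ω, hH ω]
    have htail : (∑ t ∈ Finset.Icc (σ ω + 1) T, χ t ω) = chiStar T χ (σ ω + 1) ω := rfl
    rw [htail]
    have hXX' : dotp (X' (σ ω) ω) (S (σ ω) ω) ≤ dotp (X (σ ω) ω) (S (σ ω) ω) := by
      have hc := (hGO.2.2.2 (σ ω) ω (hsT ω)).1
      have hp := hS (σ ω) ω (hsT ω) _ hc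
      rw [dotp_comm', dotp_sub_left'] at hp
      linarith
    by_cases hlt : σ ω < T
    · rw [if_pos hlt, chiStar_step (hsT ω)]
      have hχs : 0 ≤ χ (σ ω) ω := hχ0 (σ ω) ω (hsT ω)
      nlinarith [mul_nonneg hχs (sub_nonneg.2 hXX')]
    · have hT : σ ω = T := by have := hsT ω; omega
      rw [if_neg hlt, chiStar_step (hsT ω), hT, chiStar_top_succ]
      ring_nf
      simp [hT]
  · -- chiPrime is adapted
    intro t ht
    by_cases htT : t = T
    · subst htT
      intro s _
      rw [M.F_top]
      exact MeasurableSpace.measurableSet_top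
    · have heq : chiPrime T χ σ t = fun ω => if t < σ ω then χ t ω else 0 := by
        funext ω; simp [chiPrime, htT]
      rw [heq]
      refine Measurable.ite ?_ (hχm t ht) measurable_const
      have h1 : {ω | t < σ ω} = {ω | σ ω ≤ t}ᶜ := by
        ext ω; simp [not_le]
      rw [h1]
      exact (hσ.2 t).compl
  · -- chiPrime is nonnegative
    intro t ω ht
    unfold chiPrime
    split
    · exact hχ0 t ω ht
    · split
      · exact Finset.sum_nonneg (fun s hs => by
          simp only [Finset.mem_Icc] at hs
          exact hχ0 s ω hs.2)
      · exact le_refl 0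
  · -- chiPrime sums to one
    intro ω
    rw [sum_split_at (hsT ω), hIcc']
    have h0 : chiPrime T χ σ (σ ω) ω
        = if σ ω = T then chiStar T χ (σ ω) ω else 0 := by
      simp [chiPrime]
    have h1 : ∑ t ∈ Finset.range (σ ω), chiPrime T χ σ t ω
        = ∑ t ∈ Finset.range (σ ω), χ t ω := by
      refine Finset.sum_congr rfl (fun t ht => ?_)
      simp only [Finset.mem_range] at ht
      simp [chiPrime, ht]
    have hkey : (∑ t ∈ Finset.range (σ ω), χ t ω) + chiStar T χ (σ ω) ω = 1 := by
      rw [chiStar_step (hsT ω), ← hχ1 ω, sum_split_at (hsT ω) (fun t => χ t ω),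
        show chiStar T χ (σ ω + 1) ω = ∑ t ∈ Finset.Icc (σ ω + 1) T, χ t ω from rfl]
      ring
    rw [h0, h1]
    by_cases hlt : σ ω < T
    · rw [if_neg (show ¬ σ ω = T by omega), if_pos hlt]
      linarith
    · have hT : σ ω = T := by have := hsT ω; omega
      rw [if_pos hT, if_neg hlt]
      linarith
  · -- the truncations agree
    intro t _ ω
    unfold trunc
    by_cases h1 : t < σ ω
    · rw [if_pos h1, if_pos h1]
      simp [chiPrime, h1]
    · rw [if_neg h1, if_neg h1]
      by_cases h2 : t = σ ω
      · rw [if_pos h2, if_pos h2, h2, hStar' ω]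
      · rw [if_neg h2, if_neg h2]
  · -- the equality of values
    intro ω
    rw [hH ω, hQ (chiPrime T χ σ) ω, hIcc']
    have h0 : chiPrime T χ σ (σ ω) ω
        = if σ ω = T then chiStar T χ (σ ω) ω else 0 := by
      simp [chiPrime]
    have h1 : ∑ t ∈ Finset.range (σ ω), chiPrime T χ σ t ω * dotp (Y t ω) (S t ω)
        = ∑ t ∈ Finset.range (σ ω), χ t ω * dotp (Y t ω) (S t ω) := by
      refine Finset.sum_congr rfl (fun t ht => ?_)
      simp only [Finset.mem_range] at ht
      simp [chiPrime, ht]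
    rw [h0, h1]
    by_cases hlt : σ ω < T
    · rw [if_neg (show ¬ σ ω = T by omega), if_pos hlt, if_pos hlt]
      ring
    · have hT : σ ω = T := by have := hsT ω; omega
      rw [if_pos hT, if_neg hlt, if_neg hlt]
      ring
end
end
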